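/- arXiv:2005.08744 — 3 statements merged into one kernel-verified Lean document; each statement's English description precedes it below -/
import Mathlib

section
/- Let R be a possibly non-commutative but associative ring graded over the integers, let x be a homogeneous element of R of degree t ≥ 0, and let Y be a graded R-module equipped with a descending filtration Y = Fil⁰Y ⊇ Fil¹Y ⊇ ⋯ by graded submodules. Suppose there are functions f, g : ℕ → ℕ such that (1) x^{f(n)} · Filⁿ Y ⊆ Fil^{n+1} Y for every n, (2) the graded piece (Filⁿ Y)_d vanishes for all d < g(n), and (3) g(n) − t·(f(0)+f(1)+⋯+f(n−1)) → ∞ as n → ∞. Then every homogeneous element of Y is annihilated by some power of x (equivalently, the localization Y[1/x] vanishes). -/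
/-- Let `R` be a (possibly noncommutative) ring, `x ∈ R`
homogeneous of degree `t ≥ 0` (expressed via its action on the grading `ℳ` of
the `R`-module `Y`), and let `Y` be a graded `R`-module with a descending
filtration `Fil` by submodules starting at `Y` itself.  If there are functions
`f g : ℕ → ℕ` with `x ^ f n • Fil n ⊆ Fil (n+1)`, `(Fil n)_d = 0` for
`d < g n`, and `g n - t * (f 0 + ⋯ + f (n-1)) → ∞`, then every homogeneous
element of `Y` is annihilated by a power of `x` (i.e. `Y[1/x] = 0`). -/
theorem stmt0 {R Y : Type*} [Ring R] [AddCommGroup Y] [Module R Y]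
    (ℳ : ℤ → AddSubgroup Y) (x : R) (t : ℤ) (ht : 0 ≤ t)
    (hx : ∀ d : ℤ, ∀ m ∈ ℳ d, x • m ∈ ℳ (d + t))
    (Fil : ℕ → Submodule R Y)
    (hFil0 : Fil 0 = ⊤)
    (hdesc : ∀ n, Fil (n + 1) ≤ Fil n)
    (f g : ℕ → ℕ)
    (h1 : ∀ n, ∀ m ∈ Fil n, x ^ f n • m ∈ Fil (n + 1))
    (h2 : ∀ n, ∀ d : ℤ, d < (g n : ℤ) → ∀ m ∈ Fil n, m ∈ ℳ d → m = 0)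
    (h3 : Filter.Tendsto
      (fun n : ℕ => (g n : ℤ) - t * ∑ i ∈ Finset.range n, (f i : ℤ))
      Filter.atTop Filter.atTop) :
    ∀ d : ℤ, ∀ y ∈ ℳ d, ∃ N : ℕ, x ^ N • y = 0 := by
  intro d y hy
  -- powers of x move grading
  have hpow : ∀ (k : ℕ) (e : ℤ) (m : Y), m ∈ ℳ e → x ^ k • m ∈ ℳ (e + t * k) := by
    intro k
    induction k with
    | zero => intro e m hm; simpa using hm
    | succ k ih =>
      intro e m hm
      have := hx (e + t * k) _ (ih e m hm)
      rw [pow_succ', mul_smul]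
      · convert this using 2
        push_cast; ring
  set S : ℕ → ℕ := fun n => ∑ i ∈ Finset.range n, f i with hS
  have key : ∀ n, x ^ S n • y ∈ Fil n := by
    intro n
    induction n with
    | zero => simp [hFil0]
    | succ n ih =>
      have : S (n + 1) = f n + S n := by
        simp [hS, Finset.sum_range_succ, Nat.add_comm]
      rw [this, pow_add, mul_smul]
      exact h1 n _ ih
  -- choose n large
  obtain ⟨n, hn⟩ := (Filter.tendsto_atTop.mp h3 (d + 1)).exists
  refine ⟨S n, ?_⟩
  have hmem : x ^ S n • y ∈ ℳ (d + t * S n) := hpow (S n) d y hy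
  refine h2 n (d + t * S n) ?_ _ (key n) hmem
  have : (S n : ℤ) = ∑ i ∈ Finset.range n, (f i : ℤ) := by push_cast [hS]; rfl
  rw [this]
  omega
end

section
/- Let k be a perfect field of characteristic p and K a finitely generated field extension of k. Then [K : K^p] = p^r, where r is the transcendence degree of K over k. -/
/-!
Put `F = k(x)`, so that `K / F` is finite. As `k` is perfect, Frobenius maps `F` onto
`k(x^p)`, and comparing the towers `k(x^p) ⊆ F ⊆ K` and `k(x^p) ⊆ K^p ⊆ K`, where
`[K^p : k(x^p)] = [K : F]` via the isomorphism `K ≅ K^p`, gives `[K : K^p] = [k(x) : k(x^p)]`.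
Adjoining the `x i` to `k(x^p)` one at a time, each step is `[E(t) : E(t^p)] = p` for `t`
transcendental over `E`, which is the degree of the rational function `X^p`.
-/

/-- The subfield of `p`-th powers of a field `K`. -/
def pthPowers (K : Type*) [Field K] (p : ℕ) : Subfield K :=
  Subfield.closure (Set.range fun a : K => a ^ p)

/-- The `p`-degree `[K : K^p]` as a cardinal. -/
noncomputable def pDeg (K : Type*) [Field K] (p : ℕ) : Cardinal :=
  Module.rank (pthPowers K p) K

open IntermediateField

theorem Transcendental.relrank_adjoin_pow {E L : Type*} [Field E] [Field L] [Algebra E L]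
    {t : L} (ht : Transcendental E t) {n : ℕ} (hn : n ≠ 0) :
    relrank E⟮t ^ n⟯ E⟮t⟯ = n := by
  let f : RatFunc E →ₐ[E] L := E⟮t⟯.val.comp (RatFunc.algEquivOfTranscendental t ht).toAlgHom
  have hfX : f RatFunc.X = t := by simp [f, RatFunc.algEquivOfTranscendental_X]
  have hdeg : Module.finrank E⟮(RatFunc.X ^ n : RatFunc E)⟯ (RatFunc E) = n := by
    rw [RatFunc.finrank_eq_max_natDegree, ← RatFunc.algebraMap_X, ← map_pow,
      RatFunc.num_algebraMap, RatFunc.denom_algebraMap]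
    simp
  have : FiniteDimensional E⟮(RatFunc.X ^ n : RatFunc E)⟯ (RatFunc E) :=
    Module.finite_of_finrank_pos (by omega)
  have hrank : relrank E⟮(RatFunc.X ^ n : RatFunc E)⟯ E⟮(RatFunc.X : RatFunc E)⟯ = n := by
    rw [RatFunc.adjoin_X, relrank_top_right, ← Module.finrank_eq_rank, hdeg]
  have hmap := lift_relrank_map_map E⟮(RatFunc.X ^ n : RatFunc E)⟯ E⟮(RatFunc.X : RatFunc E)⟯ f
  simpa [adjoin_map, hfX, hrank] using hmap

section PowAdjoin

variable {k K ι : Type*} [Field k] [Field K] [Algebra k K]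

variable (k) in
def powAdjoin (x : ι → K) (n : ℕ) (s : Set ι) : IntermediateField k K :=
  adjoin k ((fun i => x i ^ n) '' sᶜ ∪ x '' s)

theorem powAdjoin_empty (x : ι → K) (n : ℕ) :
    powAdjoin k x n ∅ = adjoin k (Set.range fun i => x i ^ n) := by
  simp [powAdjoin, Set.image_univ]

theorem powAdjoin_univ (x : ι → K) (n : ℕ) :
    powAdjoin k x n Set.univ = adjoin k (Set.range x) := by
  simp [powAdjoin, Set.image_univ]

theorem powAdjoin_mono (x : ι → K) (n : ℕ) {s t : Set ι} (hst : s ⊆ t) :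
    powAdjoin k x n s ≤ powAdjoin k x n t := by
  refine adjoin_le_iff.2 (Set.union_subset ?_ ?_)
  · rintro _ ⟨i, -, rfl⟩
    by_cases hit : i ∈ t
    · exact pow_mem (subset_adjoin k _ (Set.mem_union_right _ (Set.mem_image_of_mem x hit))) n
    · exact subset_adjoin k _ (Set.mem_union_left _ (Set.mem_image_of_mem (x · ^ n) hit))
  · exact (Set.image_mono hst).trans (Set.subset_union_right.trans (subset_adjoin k _))

theorem AlgebraicIndependent.relrank_powAdjoin_insert {x : ι → K}
    (hx : AlgebraicIndependent k x) {n : ℕ} (hn : n ≠ 0) {s : Set ι} {a : ι} (ha : a ∉ s) :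
    relrank (powAdjoin k x n s) (powAdjoin k x n (insert a s)) = n := by
  set S := (fun i => x i ^ n) '' (insert a s)ᶜ ∪ x '' s
  have hS : Algebra.adjoin k S ≤ Algebra.adjoin k (x '' {a}ᶜ) := by
    refine Algebra.adjoin_le (Set.union_subset ?_ ?_)
    · rintro _ ⟨i, hi, rfl⟩
      exact pow_mem (Algebra.subset_adjoin
        (Set.mem_image_of_mem x (show i ∈ ({a}ᶜ : Set ι) from fun h => hi (Or.inl h)))) n
    · rintro _ ⟨i, hi, rfl⟩
      exact Algebra.subset_adjoin
        (Set.mem_image_of_mem x (show i ∈ ({a}ᶜ : Set ι) from fun h => ha (h ▸ hi)))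
  have ht : Transcendental (adjoin k S) (x a) := IntermediateField.transcendental_adjoin_iff.2 <|
    (hx.transcendental_adjoin (s := {a}ᶜ) (by simp)).of_tower_top_of_subalgebra_le hS
  have hs : powAdjoin k x n s = ((adjoin k S)⟮x a ^ n⟯).restrictScalars k := by
    rw [adjoin_adjoin_left, powAdjoin]
    congr 1
    ext y
    simp only [S, Set.mem_union, Set.mem_image, Set.mem_compl_iff, Set.mem_insert_iff,
      Set.mem_singleton_iff]
    grind
  have hins : powAdjoin k x n (insert a s) = ((adjoin k S)⟮x a⟯).restrictScalars k := by
    rw [adjoin_adjoin_left, powAdjoin]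
    congr 1
    ext y
    simp only [S, Set.mem_union, Set.mem_image, Set.mem_compl_iff, Set.mem_insert_iff,
      Set.mem_singleton_iff]
    grind
  rw [hs, hins]
  exact ht.relrank_adjoin_pow hn

theorem AlgebraicIndependent.relrank_adjoin_pow [Fintype ι] {x : ι → K}
    (hx : AlgebraicIndependent k x) {n : ℕ} (hn : n ≠ 0) :
    relrank (adjoin k (Set.range fun i => x i ^ n)) (adjoin k (Set.range x)) =
      (n : Cardinal) ^ Fintype.card ι := by
  classical
  have key (s : Finset ι) :
      relrank (powAdjoin k x n ∅) (powAdjoin k x n s) = (n : Cardinal) ^ s.card := by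
    induction s using Finset.induction_on with
    | empty => simp
    | insert a s ha ih =>
      rw [Finset.coe_insert, ← relrank_mul_relrank (powAdjoin_mono x n (Set.empty_subset _))
        (powAdjoin_mono x n (Set.subset_insert a _)), ih, hx.relrank_powAdjoin_insert hn ha,
        Finset.card_insert_of_notMem ha, pow_succ]
  simpa [powAdjoin_empty, powAdjoin_univ] using key Finset.univ

end PowAdjoin

theorem IntermediateField.map_frobenius_adjoin_toSubfield (p : ℕ) {k K : Type*} [Field k]
    [Field K] [Algebra k K] [ExpChar k p] [ExpChar K p] [PerfectRing k p] {ι : Type*}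
    (x : ι → K) :
    (adjoin k (Set.range x)).toSubfield.map (frobenius K p) =
      (adjoin k (Set.range fun i => x i ^ p)).toSubfield := by
  rw [adjoin_toSubfield, adjoin_toSubfield, RingHom.map_field_closure, Set.image_union,
    ← Set.range_comp, ← Set.range_comp]
  congr 2
  have hcomm : frobenius K p ∘ algebraMap k K = algebraMap k K ∘ frobenius k p :=
    congrArg DFunLike.coe ((algebraMap k K).frobenius_comm p).symm
  rw [hcomm, Set.range_comp, (surjective_frobenius k p).range_eq, Set.image_univ]

theorem IntermediateField.finiteDimensional_of_adjoin_eq_top {k K : Type*} [Field k] [Field K]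
    [Algebra k K] (F : IntermediateField k K) [Algebra.IsAlgebraic F K] {s : Finset K}
    (hs : adjoin k (s : Set K) = ⊤) : FiniteDimensional F K := by
  have htop : adjoin F (s : Set K) = ⊤ := by
    rw [← restrictScalars_eq_top_iff (K := k), restrictScalars_adjoin, eq_top_iff, ← hs]
    exact adjoin.mono _ _ _ Set.subset_union_right
  have : FiniteDimensional F (adjoin F (s : Set K)) :=
    finiteDimensional_adjoin fun a _ => Algebra.IsIntegral.isIntegral a
  rw [htop] at this
  exact topEquiv.toLinearEquiv.finiteDimensional

theorem Subfield.rank_fieldRange_eq_relrank_map {K : Type*} [Field K] (f : K →+* K)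
    {F : Subfield K} (hF : F.map f ≤ F) [FiniteDimensional F K] :
    Module.rank f.fieldRange K = relrank (F.map f) F := by
  have hmap : relrank (F.map f) f.fieldRange = Module.finrank F K := by
    rw [RingHom.fieldRange_eq_map, relrank_map_map, relrank_top_right, Module.finrank_eq_rank]
  have htower := (relrank_mul_relrank hF (le_top : F ≤ ⊤)).trans
    (relrank_mul_relrank (f.fieldRange_eq_map ▸ (gc_map_comap f).monotone_l le_top :
      F.map f ≤ f.fieldRange) le_top).symm
  rw [relrank_top_right, ← Module.finrank_eq_rank, hmap, mul_comm] at htower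
  rw [← relrank_top_right]
  exact ((Cardinal.natCast_mul_inj Module.finrank_pos.ne').1 htower).symm

theorem pthPowers_eq_fieldRange_frobenius (K : Type*) [Field K] (p : ℕ) [ExpChar K p] :
    pthPowers K p = (frobenius K p).fieldRange := by
  rw [pthPowers, ← Subfield.closure_eq (frobenius K p).fieldRange, RingHom.coe_fieldRange]
  rfl

/-- Let `k` be a perfect field of characteristic `p` and `K`
a finitely generated field extension of `k`.  Then `[K : K^p] = p^r` where `r`
is the transcendence degree of `K` over `k` (expressed via a finite
transcendence basis). -/
theorem stmt2 (p : ℕ) [Fact p.Prime]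
    (k K : Type*) [Field k] [Field K] [Algebra k K]
    [CharP k p] [CharP K p] [PerfectRing k p]
    (hfg : ∃ s : Finset K, IntermediateField.adjoin k (s : Set K) = ⊤)
    (ι : Type*) [Fintype ι] (x : ι → K) (hx : IsTranscendenceBasis k x) :
    pDeg K p = (p : Cardinal) ^ (Fintype.card ι) := by
  set F := adjoin k (Set.range x)
  obtain ⟨s, hs⟩ := hfg
  have : Algebra.IsAlgebraic F K := hx.isAlgebraic_field
  have : FiniteDimensional F.toSubfield K := F.finiteDimensional_of_adjoin_eq_top hs
  have hmap := map_frobenius_adjoin_toSubfield p (k := k) x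
  have hle : adjoin k (Set.range fun i => x i ^ p) ≤ F :=
    adjoin_le_iff.2 <| Set.range_subset_iff.2 fun i => pow_mem (subset_adjoin k _ (Set.mem_range_self i)) p
  rw [pDeg, pthPowers_eq_fieldRange_frobenius,
    Subfield.rank_fieldRange_eq_relrank_map _ (hmap ▸ hle : _ ≤ F.toSubfield), hmap]
  exact hx.1.relrank_adjoin_pow (Fact.out : p.Prime).ne_zero
end

section
/- Let C be a spherically complete nonarchimedean field with ring of integers 𝒪_C (a valuation ring). Then for any inverse system (tower) {M_i}_{i≥1} of cyclic 𝒪_C-modules with arbitrary transition maps, the derived inverse limit satisfies lim¹ M_i = 0. -/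
/-!
Choose generators `m i` of `M i` and write `f i (m (i+1)) = a i • m i` and `y i = b i • m i`.
Then `x i = c i • m i` is a preimage of `y` as soon as `c i = b i + a i * c (i+1)` in `𝒪_C`.
The formal solution `c i = ∑_{k ≥ i} (a i ⋯ a (k-1)) b k` need not converge, but the balls
around its partial sums `partialSum a b i N` of radii `‖a i ⋯ a (N-1)‖` are nested, and
spherical completeness provides a point `c i` in all of them. Dividing by `a i` (when it is
nonzero) moves such a point from index `i` to index `i + 1`, which solves the recurrence step
by step.
-/

open Metric in
/-- The ring of integers `𝒪_C = {x : ‖x‖ ≤ 1}` of a nonarchimedean normed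
field. -/
def ringOfIntegers (C : Type*) [NormedField C] [IsUltrametricDist C] :
    Subring C where
  carrier := {x : C | ‖x‖ ≤ 1}
  mul_mem' {a b} ha hb := by
    simpa using mul_le_one₀ ha (norm_nonneg b) hb
  one_mem' := by simp
  add_mem' {a b} ha hb := by
    simpa using (IsUltrametricDist.norm_add_le_max a b).trans (max_le ha hb)
  zero_mem' := by simp
  neg_mem' {a} ha := by simpa using ha

open Metric Finset

theorem exists_seq_of_exists_succ {α : Type*} (P : ℕ → α → Prop) (R : ℕ → α → α → Prop)
    (h₀ : ∃ x, P 0 x) (hsucc : ∀ i x, P i x → ∃ y, P (i + 1) y ∧ R i x y) :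
    ∃ x : ℕ → α, ∀ i, P i (x i) ∧ R i (x i) (x (i + 1)) := by
  choose next hnextP hnextR using hsucc
  obtain ⟨x₀, hx₀⟩ := h₀
  let x : ∀ i, {x // P i x} := fun i => Nat.rec ⟨x₀, hx₀⟩ (fun i p => ⟨next i p.1 p.2, hnextP ..⟩) i
  exact ⟨fun i => (x i).1, fun i => ⟨(x i).2, hnextR i _ (x i).2⟩⟩

def IsSphericallyComplete (X : Type*) [PseudoMetricSpace X] : Prop :=
  ∀ (x : ℕ → X) (r : ℕ → ℝ), (∀ n, 0 ≤ r n) →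
    (∀ n, closedBall (x (n + 1)) (r (n + 1)) ⊆ closedBall (x n) (r n)) →
    (⋂ n, closedBall (x n) (r n)).Nonempty

theorem IsSphericallyComplete.exists_forall_dist_le {X : Type*} [PseudoMetricSpace X]
    [IsUltrametricDist X] (hX : IsSphericallyComplete X) (x : ℕ → X) (r : ℕ → ℝ)
    (hr₀ : ∀ n, 0 ≤ r n) (hr : ∀ n, r (n + 1) ≤ r n) (hx : ∀ n, dist (x (n + 1)) (x n) ≤ r n) :
    ∃ c, ∀ n, dist c (x n) ≤ r n := by
  have hnested : ∀ n, closedBall (x (n + 1)) (r (n + 1)) ⊆ closedBall (x n) (r n) := fun n => by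
    rw [IsUltrametricDist.closedBall_eq_of_mem (mem_closedBall.mpr (hx n))]
    exact closedBall_subset_closedBall (hr n)
  obtain ⟨c, hc⟩ := hX x r hr₀ hnested
  exact ⟨c, fun n => mem_closedBall.mp (Set.mem_iInter.mp hc n)⟩

section Recurrence

variable {R : Type*} [CommRing R] (a b : ℕ → R)

def partialProd (i N : ℕ) : R := ∏ k ∈ Ico i N, a k

def partialSum (i N : ℕ) : R := ∑ k ∈ Ico i N, partialProd a i k * b k

variable {a} {i N : ℕ}

@[simp] theorem partialProd_self : partialProd a i i = 1 := by simp [partialProd]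

theorem partialProd_succ_right (h : i ≤ N) : partialProd a i (N + 1) = partialProd a i N * a N :=
  prod_Ico_succ_top h a

theorem partialProd_eq_mul_partialProd_succ (h : i < N) :
    partialProd a i N = a i * partialProd a (i + 1) N :=
  prod_eq_prod_Ico_succ_bot h a

@[simp] theorem partialSum_self : partialSum a b i i = 0 := by simp [partialSum]

theorem partialSum_succ_right (h : i ≤ N) :
    partialSum a b i (N + 1) = partialSum a b i N + partialProd a i N * b N :=
  sum_Ico_succ_top h _

theorem partialSum_eq_add_mul_partialSum_succ (h : i < N) :
    partialSum a b i N = b i + a i * partialSum a b (i + 1) N := by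
  rw [partialSum, sum_eq_sum_Ico_succ_bot h, partialProd_self, one_mul, partialSum, mul_sum]
  congr 1
  refine sum_congr rfl fun k hk => ?_
  rw [partialProd_eq_mul_partialProd_succ (mem_Ico.mp hk).1, mul_assoc]

end Recurrence

section NormedRecurrence

variable {K : Type*} [NormedField K] {a b : ℕ → K} {i N : ℕ}

theorem norm_partialProd_le_one (ha : ∀ k, ‖a k‖ ≤ 1) : ‖partialProd a i N‖ ≤ 1 := by
  rw [partialProd, norm_prod]
  exact prod_le_one (fun _ _ => norm_nonneg _) fun k _ => ha k

theorem norm_partialProd_succ_le (ha : ∀ k, ‖a k‖ ≤ 1) (h : i ≤ N) :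
    ‖partialProd a i (N + 1)‖ ≤ ‖partialProd a i N‖ := by
  rw [partialProd_succ_right h, norm_mul]
  exact mul_le_of_le_one_right (norm_nonneg _) (ha N)

theorem norm_partialSum_succ_sub_le (hb : ∀ k, ‖b k‖ ≤ 1) (h : i ≤ N) :
    ‖partialSum a b i (N + 1) - partialSum a b i N‖ ≤ ‖partialProd a i N‖ := by
  rw [partialSum_succ_right b h, add_sub_cancel_left, norm_mul]
  exact mul_le_of_le_one_right (norm_nonneg _) (hb N)

variable (a b) in
/-- The candidates for the value at `i` of a solution of `c i = b i + a i * c (i + 1)`. -/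
def IsTailSum (i : ℕ) (c : K) : Prop :=
  ∀ N, i ≤ N → ‖c - partialSum a b i N‖ ≤ ‖partialProd a i N‖

theorem IsTailSum.norm_le_one {c : K} (hc : IsTailSum a b i c) : ‖c‖ ≤ 1 := by
  simpa using hc i le_rfl

theorem exists_isTailSum [IsUltrametricDist K] (hK : IsSphericallyComplete K)
    (ha : ∀ k, ‖a k‖ ≤ 1) (hb : ∀ k, ‖b k‖ ≤ 1) (i : ℕ) : ∃ c, IsTailSum a b i c := by
  obtain ⟨c, hc⟩ := hK.exists_forall_dist_le (fun n => partialSum a b i (i + n))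
    (fun n => ‖partialProd a i (i + n)‖) (fun _ => norm_nonneg _)
    (fun n => norm_partialProd_succ_le ha (Nat.le_add_right i n))
    (fun n => (dist_eq_norm _ _).trans_le (norm_partialSum_succ_sub_le hb (Nat.le_add_right i n)))
  refine ⟨c, fun N hN => ?_⟩
  simpa [dist_eq_norm, Nat.add_sub_cancel' hN] using hc (N - i)

theorem IsTailSum.exists_succ [IsUltrametricDist K] (hK : IsSphericallyComplete K)
    (ha : ∀ k, ‖a k‖ ≤ 1) (hb : ∀ k, ‖b k‖ ≤ 1) {c : K} (hc : IsTailSum a b i c) :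
    ∃ c', IsTailSum a b (i + 1) c' ∧ c = b i + a i * c' := by
  by_cases hai : a i = 0
  · obtain ⟨c', hc'⟩ := exists_isTailSum hK ha hb (i + 1)
    refine ⟨c', hc', ?_⟩
    have h := hc (i + 1) i.le_succ
    rw [partialSum_succ_right b le_rfl, partialProd_succ_right le_rfl, hai] at h
    simpa [hai, sub_eq_zero] using h
  · refine ⟨(c - b i) / a i, fun N hN => ?_, by field_simp; ring⟩
    have h := hc N (Nat.le_of_succ_le hN)
    rwa [partialSum_eq_add_mul_partialSum_succ b hN, partialProd_eq_mul_partialProd_succ hN,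
      show c - (b i + a i * partialSum a b (i + 1) N) = a i * ((c - b i) / a i -
        partialSum a b (i + 1) N) by field_simp; ring, norm_mul, norm_mul,
      mul_le_mul_iff_right₀ (norm_pos_iff.mpr hai)] at h

theorem exists_bounded_solution [IsUltrametricDist K] (hK : IsSphericallyComplete K)
    (ha : ∀ k, ‖a k‖ ≤ 1) (hb : ∀ k, ‖b k‖ ≤ 1) :
    ∃ c : ℕ → K, (∀ i, ‖c i‖ ≤ 1) ∧ ∀ i, c i = b i + a i * c (i + 1) := by
  obtain ⟨c, hc⟩ := exists_seq_of_exists_succ (IsTailSum a b) (fun i c c' => c = b i + a i * c')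
    (exists_isTailSum hK ha hb 0) fun i _ h => h.exists_succ hK ha hb
  exact ⟨c, fun i => (hc i).1.norm_le_one, fun i => (hc i).2⟩

end NormedRecurrence

theorem ringOfIntegers.exists_solution {C : Type*} [NormedField C] [IsUltrametricDist C]
    (hC : IsSphericallyComplete C) (a b : ℕ → ringOfIntegers C) :
    ∃ c : ℕ → ringOfIntegers C, ∀ i, c i = b i + a i * c (i + 1) := by
  obtain ⟨c, hc₁, hc⟩ := exists_bounded_solution hC (fun i => (a i).2) (fun i => (b i).2)
  exact ⟨fun i => ⟨c i, hc₁ i⟩, fun i => Subtype.ext (hc i)⟩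

/-- Let `C` be a spherically complete nonarchimedean field
with ring of integers `𝒪_C`.  For any tower `{M_i}` of cyclic `𝒪_C`-modules
(with arbitrary transition maps `f i : M (i+1) → M i`), we have
`lim¹ M_i = 0`, i.e. the map `(x_i) ↦ (x_i - f_i (x_{i+1}))` on `∏ M_i` is
surjective. -/
theorem stmt6 (C : Type*) [NormedField C] [IsUltrametricDist C]
    (hsph : ∀ (x : ℕ → C) (r : ℕ → ℝ), (∀ n, 0 ≤ r n) →
      (∀ n, Metric.closedBall (x (n + 1)) (r (n + 1)) ⊆
        Metric.closedBall (x n) (r n)) →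
      (⋂ n, Metric.closedBall (x n) (r n)).Nonempty)
    (M : ℕ → Type*) [∀ i, AddCommGroup (M i)]
    [∀ i, Module (ringOfIntegers C) (M i)]
    (hcyc : ∀ i, ∃ m : M i, ∀ y : M i, ∃ r : ringOfIntegers C, r • m = y)
    (f : ∀ i, M (i + 1) →ₗ[ringOfIntegers C] M i) :
    Function.Surjective
      (fun x : (∀ i, M i) => fun i => x i - f i (x (i + 1))) := by
  intro y
  choose m hm using hcyc
  choose b hb using fun i => hm i (y i)
  choose a ha using fun i => hm i (f i (m (i + 1)))
  obtain ⟨c, hc⟩ := ringOfIntegers.exists_solution hsph a b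
  refine ⟨fun i => c i • m i, funext fun i => ?_⟩
  simp only
  rw [map_smul, ← ha i, smul_comm, hc i, add_smul, mul_smul, add_sub_cancel_right, hb i]
end
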